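/- arXiv:1503.08418 — 2 statements merged into one kernel-verified Lean document; each statement's English description precedes it below -/
import Mathlib

section
/- For all n ≥ 0, the degenerate poly-Bernoulli polynomials of index k = 2 satisfy β_n^{(2)}(x|λ) = β_n(x|λ) − (n/4) β_{n−1}(x|λ) + Σ_{l=2}^{n} C(n,l) (B_l/(l+1)) β_{n−l}(x|λ), where B_l are the Bernoulli numbers (with the convention that the middle term is absent when n = 0). -/
open Finset

/-- The generalized falling factorial `(x|λ)ₙ = x(x−λ)(x−2λ)⋯(x−(n−1)λ)`. -/
noncomputable def genFall (lam x : ℂ) (n : ℕ) : ℂ :=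
  ∏ i ∈ Finset.range n, (x - (i : ℂ) * lam)

/-- The formal power series `(1+λt)^{x/λ} = Σ_{n≥0} (x|λ)ₙ tⁿ/n!`. -/
noncomputable def degExp (lam x : ℂ) : PowerSeries ℂ :=
  PowerSeries.mk fun n => genFall lam x n / (n.factorial : ℂ)

/-- The formal power series `1 - e^{-t}`. -/
noncomputable def oneSubExpNeg : PowerSeries ℂ :=
  PowerSeries.mk fun n => if n = 0 then 0 else -((-1 : ℂ) ^ n) / (n.factorial : ℂ)

/-- The formal power series `Li_k(1 - e^{-t}) = Σ_{n≥1} (1-e^{-t})ⁿ/nᵏ`; since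
`(1-e^{-t})ⁿ` has order at least `n`, the coefficient of `tˡ` only involves `n ≤ l`. -/
noncomputable def polyLogComp (k : ℤ) : PowerSeries ℂ :=
  PowerSeries.mk fun l =>
    ∑ n ∈ Finset.Icc 1 l, ((n : ℂ) ^ k)⁻¹ * PowerSeries.coeff (R := ℂ) l (oneSubExpNeg ^ n)

/-- Stirling numbers of the second kind `S₂(n, k)`. -/
def S2 : ℕ → ℕ → ℕ
  | 0, 0 => 1
  | 0, _ + 1 => 0
  | _ + 1, 0 => 0
  | n + 1, k + 1 => (k + 1) * S2 n (k + 1) + S2 n k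

/-!
Write `F = 1 - e^{-t}` and `Liₖ = Liₖ(F)`. Termwise differentiation of `Σ Fⁿ/nᵏ`, using
`F' = e^{-t}`, gives `Li'ₖ₊₁ · F = e^{-t} · Liₖ`, and the geometric series gives
`Li₀ · e^{-t} = F`. Hence `Li₁ = t` and `Li'₂ · (eᵗ - 1) = t`, i.e. `Li'₂ = t/(eᵗ - 1)`, so
`Li₂ = t · Σ Bₗ/(l+1) · tˡ/l!`. Dividing the two generating functions then expresses `βₙ⁽²⁾` as
the binomial convolution of `Bₗ/(l+1)` with `βₙ`; the terms `l = 0, 1` give `βₙ - (n/4) βₙ₋₁`.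
-/

open PowerSeries

noncomputable def expNeg : ℂ⟦X⟧ := evalNegHom (exp ℂ)

lemma coeff_expNeg (n : ℕ) : coeff n expNeg = (-1 : ℂ) ^ n / n.factorial := by
  simp [expNeg, evalNegHom, coeff_rescale, coeff_exp, div_eq_mul_inv]

lemma expNeg_ne_zero : expNeg ≠ 0 := fun h => by
  simpa [h] using coeff_expNeg 0

lemma oneSubExpNeg_eq : oneSubExpNeg = 1 - expNeg := by
  ext (_ | n)
  · rw [map_sub, coeff_expNeg]
    simp [oneSubExpNeg]
  · simp [oneSubExpNeg, coeff_expNeg, coeff_one, neg_div]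

lemma oneSubExpNeg_eq_expNeg_mul : oneSubExpNeg = expNeg * (exp ℂ - 1) := by
  rw [oneSubExpNeg_eq, mul_sub, mul_one, mul_comm, expNeg, exp_mul_exp_neg_eq_one]

lemma derivative_oneSubExpNeg : d⁄dX ℂ oneSubExpNeg = expNeg := by
  rw [oneSubExpNeg_eq, map_sub, derivative_one, zero_sub]
  ext n
  rw [map_neg, coeff_derivative, coeff_expNeg, coeff_expNeg, Nat.factorial_succ]
  push_cast
  field_simp
  ring

lemma X_dvd_oneSubExpNeg : X ∣ oneSubExpNeg :=
  X_dvd_iff.2 (by simp [oneSubExpNeg])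

lemma exp_sub_one_ne_zero : (exp ℂ - 1 : ℂ⟦X⟧) ≠ 0 := fun h => by
  simpa [coeff_exp] using congrArg (coeff 1) h

lemma oneSubExpNeg_ne_zero : oneSubExpNeg ≠ 0 := by
  rw [oneSubExpNeg_eq_expNeg_mul]
  exact mul_ne_zero expNeg_ne_zero exp_sub_one_ne_zero

section Truncation

variable {R : Type*} [CommRing R]

lemma eq_of_forall_X_pow_dvd_sub {f g : R⟦X⟧} (h : ∀ N, X ^ N ∣ f - g) : f = g := by
  ext m
  simpa [sub_eq_zero] using X_pow_dvd_iff.1 (h (m + 1)) m (Nat.lt_succ_self m)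

lemma X_pow_dvd_derivative {f : R⟦X⟧} {N : ℕ} (h : X ^ (N + 1) ∣ f) : X ^ N ∣ d⁄dX R f := by
  rw [X_pow_dvd_iff] at h ⊢
  intro m hm
  rw [coeff_derivative, h (m + 1) (by omega), zero_mul]

end Truncation

noncomputable def polyLogTrunc (k : ℤ) (N : ℕ) : ℂ⟦X⟧ :=
  ∑ n ∈ Icc 1 N, C ((n : ℂ) ^ k)⁻¹ * oneSubExpNeg ^ n

lemma X_pow_dvd_polyLogComp_sub_polyLogTrunc (k : ℤ) (N : ℕ) :
    X ^ (N + 1) ∣ polyLogComp k - polyLogTrunc k N := by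
  have hF : ∀ m n, m < n → coeff m (oneSubExpNeg ^ n) = 0 := fun m n =>
    X_pow_dvd_iff.1 (pow_dvd_pow_of_dvd X_dvd_oneSubExpNeg n) m
  refine X_pow_dvd_iff.2 fun m hm => ?_
  rw [map_sub, sub_eq_zero, polyLogComp, coeff_mk, polyLogTrunc, map_sum,
    sum_subset (Icc_subset_Icc_right (Nat.le_of_lt_succ hm))]
  · exact sum_congr rfl fun n _ => (coeff_C_mul _ _ _).symm
  · intro n hn hnm
    simp only [mem_Icc, not_and, not_le] at hn hnm
    rw [hF m n (hnm hn.1), mul_zero]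

lemma derivative_polyLogTrunc_mul (k : ℤ) (N : ℕ) :
    d⁄dX ℂ (polyLogTrunc (k + 1) N) * oneSubExpNeg = expNeg * polyLogTrunc k N := by
  rw [polyLogTrunc, polyLogTrunc, map_sum, sum_mul, mul_sum]
  refine sum_congr rfl fun n hn => ?_
  obtain ⟨m, rfl⟩ := Nat.exists_eq_add_of_le' (mem_Icc.1 hn).1
  have hm : ((m + 1 : ℕ) : ℂ) ≠ 0 := Nat.cast_ne_zero.2 m.succ_ne_zero
  have hcoeff : ((((m + 1 : ℕ) : ℂ) ^ (k + 1))⁻¹ * (m + 1 : ℕ)) = (((m + 1 : ℕ) : ℂ) ^ k)⁻¹ := by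
    rw [zpow_add_one₀ hm]
    field_simp
  rw [Derivation.leibniz, derivative_C, smul_zero, add_zero, Derivation.leibniz_pow,
    derivative_oneSubExpNeg, Nat.add_sub_cancel, ← hcoeff, map_mul, map_natCast]
  simp only [smul_eq_mul, nsmul_eq_mul]
  ring

lemma derivative_polyLogComp_succ_mul (k : ℤ) :
    d⁄dX ℂ (polyLogComp (k + 1)) * oneSubExpNeg = expNeg * polyLogComp k := by
  -- The identity holds exactly for the truncations, which agree with `Liₖ` modulo `X ^ (N + 1)`.
  refine eq_of_forall_X_pow_dvd_sub fun N => ?_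
  have hsplit : d⁄dX ℂ (polyLogComp (k + 1)) * oneSubExpNeg - expNeg * polyLogComp k
      = d⁄dX ℂ (polyLogComp (k + 1) - polyLogTrunc (k + 1) N) * oneSubExpNeg
        - expNeg * (polyLogComp k - polyLogTrunc k N) := by
    rw [map_sub, sub_mul, mul_sub, derivative_polyLogTrunc_mul]
    ring
  rw [hsplit]
  exact dvd_sub
    ((X_pow_dvd_derivative (X_pow_dvd_polyLogComp_sub_polyLogTrunc _ N)).mul_right _)
    (((pow_dvd_pow X N.le_succ).trans (X_pow_dvd_polyLogComp_sub_polyLogTrunc k N)).mul_left _)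

lemma polyLogComp_zero_mul_expNeg : polyLogComp 0 * expNeg = oneSubExpNeg := by
  refine eq_of_forall_X_pow_dvd_sub fun N => ?_
  have hsum : polyLogTrunc 0 N = oneSubExpNeg * ∑ i ∈ range N, oneSubExpNeg ^ i := by
    rw [polyLogTrunc, ← Ico_add_one_right_eq_Icc, sum_Ico_eq_sum_range, Nat.add_sub_cancel,
      mul_sum]
    simp [pow_add]
  have htrunc : polyLogTrunc 0 N * expNeg = oneSubExpNeg - oneSubExpNeg ^ (N + 1) := by
    have hE : expNeg = 1 - oneSubExpNeg := by rw [oneSubExpNeg_eq, sub_sub_cancel]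
    rw [hsum, hE, mul_assoc, geom_sum_mul_neg]
    ring
  have hsplit : polyLogComp 0 * expNeg - oneSubExpNeg
      = (polyLogComp 0 - polyLogTrunc 0 N) * expNeg - oneSubExpNeg ^ (N + 1) := by
    rw [sub_mul, htrunc]
    ring
  rw [hsplit]
  exact dvd_sub
    (((pow_dvd_pow X N.le_succ).trans (X_pow_dvd_polyLogComp_sub_polyLogTrunc 0 N)).mul_right _)
    ((pow_dvd_pow X N.le_succ).trans (pow_dvd_pow_of_dvd X_dvd_oneSubExpNeg _))

lemma constantCoeff_polyLogComp (k : ℤ) : constantCoeff (polyLogComp k) = 0 := by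
  rw [← coeff_zero_eq_constantCoeff_apply, polyLogComp, coeff_mk]
  simp

lemma polyLogComp_one : polyLogComp 1 = X := by
  have hderiv : d⁄dX ℂ (polyLogComp 1) * oneSubExpNeg = 1 * oneSubExpNeg := by
    rw [← zero_add 1, derivative_polyLogComp_succ_mul, mul_comm, polyLogComp_zero_mul_expNeg,
      one_mul]
  refine derivative.ext ((mul_right_cancel₀ oneSubExpNeg_ne_zero hderiv).trans derivative_X.symm) ?_
  rw [constantCoeff_polyLogComp, constantCoeff_X]

lemma derivative_polyLogComp_two : d⁄dX ℂ (polyLogComp 2) = bernoulliPowerSeries ℂ := by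
  have h : d⁄dX ℂ (polyLogComp (1 + 1)) * oneSubExpNeg = expNeg * X := by
    rw [derivative_polyLogComp_succ_mul, polyLogComp_one]
  rw [oneSubExpNeg_eq_expNeg_mul, mul_left_comm] at h
  refine mul_right_cancel₀ exp_sub_one_ne_zero ?_
  rw [bernoulliPowerSeries_mul_exp_sub_one]
  exact mul_left_cancel₀ expNeg_ne_zero h

noncomputable def bernoulliDivSuccSeries : ℂ⟦X⟧ :=
  mk fun l => (bernoulli l : ℂ) / ((l : ℂ) + 1) / (l.factorial : ℂ)

lemma polyLogComp_two_eq : polyLogComp 2 = X * bernoulliDivSuccSeries := by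
  ext (_ | m)
  · rw [coeff_zero_eq_constantCoeff_apply, constantCoeff_polyLogComp, coeff_zero_X_mul]
  · have h := congrArg (coeff m) derivative_polyLogComp_two
    rw [coeff_derivative, bernoulliPowerSeries, coeff_mk, map_div₀, map_natCast, eq_ratCast] at h
    rw [coeff_succ_X_mul, bernoulliDivSuccSeries, coeff_mk, div_right_comm, ← h,
      mul_div_cancel_right₀ _ (Nat.cast_add_one_ne_zero m)]

lemma degExp_one_sub_one_ne_zero (lam : ℂ) : degExp lam 1 - 1 ≠ 0 := fun h => by
  simpa [degExp, genFall] using congrArg (coeff 1) h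

lemma coeff_mk_div_factorial_mul {K : Type*} [Field K] [CharZero K] (a b : ℕ → K) (n : ℕ) :
    coeff n ((mk fun i => a i / (i.factorial : K)) * mk fun i => b i / (i.factorial : K))
      = (∑ l ∈ range (n + 1), (n.choose l : K) * a l * b (n - l)) / (n.factorial : K) := by
  rw [coeff_mul, Nat.sum_antidiagonal_eq_sum_range_succ_mk, sum_div]
  refine sum_congr rfl fun l hl => ?_
  have hn : (n.factorial : K) ≠ 0 := by exact_mod_cast n.factorial_ne_zero
  rw [coeff_mk, coeff_mk, Nat.cast_choose K (Nat.le_of_lt_succ (mem_range.1 hl))]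
  field_simp

lemma sum_range_choose_mul_eq {R : Type*} [CommSemiring R] (c b : ℕ → R) (n : ℕ) :
    ∑ l ∈ range (n + 1), (n.choose l : R) * c l * b (n - l)
      = c 0 * b n + n * c 1 * b (n - 1) + ∑ l ∈ Icc 2 n, (n.choose l : R) * c l * b (n - l) := by
  cases n with
  | zero => simp
  | succ m =>
    rw [range_eq_Ico, sum_eq_sum_Ico_succ_bot (by omega), sum_eq_sum_Ico_succ_bot (by omega),
      Ico_add_one_right_eq_Icc]
    simp only [Nat.choose_zero_right, Nat.choose_one_right, Nat.cast_one, one_mul, Nat.sub_zero,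
      zero_add, add_assoc]

/-- `βₙ⁽²⁾(x|λ) = βₙ(x|λ) − (n/4) β_{n−1}(x|λ)
+ Σ_{l=2}^{n} C(n,l) (B_l/(l+1)) β_{n−l}(x|λ)` (the middle term is absent when `n = 0`,
corresponding to the factor `n = 0`). -/
theorem degenerate_poly_bernoulli_two_formula' (lam : ℂ) (β2 β : ℕ → ℂ → ℂ)
    (hβ2 : ∀ x : ℂ,
      (PowerSeries.mk fun n => β2 n x / (n.factorial : ℂ)) * (degExp lam 1 - 1)
        = polyLogComp 2 * degExp lam x)
    (hβ : ∀ x : ℂ,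
      (PowerSeries.mk fun n => β n x / (n.factorial : ℂ)) * (degExp lam 1 - 1)
        = PowerSeries.X * degExp lam x)
    (n : ℕ) (x : ℂ) :
    β2 n x = β n x - (n : ℂ) / 4 * β (n - 1) x
      + ∑ l ∈ Finset.Icc 2 n,
          (n.choose l : ℂ) * (((bernoulli l : ℚ) : ℂ) / ((l : ℂ) + 1)) * β (n - l) x := by
  have hser : (mk fun m => β2 m x / (m.factorial : ℂ))
      = bernoulliDivSuccSeries * mk fun m => β m x / (m.factorial : ℂ) := by
    refine mul_right_cancel₀ (degExp_one_sub_one_ne_zero lam) ?_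
    rw [hβ2 x, polyLogComp_two_eq, mul_assoc bernoulliDivSuccSeries, hβ x]
    ring
  have hcoeff := congrArg (coeff n) hser
  rw [coeff_mk, bernoulliDivSuccSeries, coeff_mk_div_factorial_mul,
    div_left_inj' (by exact_mod_cast n.factorial_ne_zero),
    sum_range_choose_mul_eq (fun l => (bernoulli l : ℂ) / ((l : ℂ) + 1)) (β · x)] at hcoeff
  rw [hcoeff]
  simp only [bernoulli_zero, bernoulli_one]
  push_cast
  ring
end

section
/- As formal power series in t, one has (1/t)·Li_k(1−e^{−t}) = Σ_{l≥0} ( Σ_{p=1}^{l+1} ((−1)^{p+l+1}/p^k) · p! · S_2(l+1,p)/(l+1) ) · t^l/l!, where S_2(m,p) denotes the Stirling numbers of the second kind. -/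
/-!
`f = 1 - e^{-t}` satisfies `f' = 1 - f`, hence `(f^(m+1))' = (m+1)(f^m - f^(m+1))`. Read on the
normalised coefficients `(-1)^(n+l) l! [tˡ] fⁿ / n!`, this is the recurrence of the Stirling
numbers of the second kind, which gives `[tˡ] fⁿ` in closed form; the theorem then compares
coefficients termwise.
-/

open Finset

open PowerSeries

theorem S2_eq_stirlingSecond : S2 = Nat.stirlingSecond := by
  funext n k
  induction n generalizing k with
  | zero => cases k <;> rfl
  | succ n ih =>
    cases k with
    | zero => rfl
    | succ k => rw [S2, Nat.stirlingSecond_succ_succ, ih, ih]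

theorem PowerSeries.coeff_succ_eq_coeff_derivative_div {K : Type*} [Field K] [CharZero K]
    (f : K⟦X⟧) (n : ℕ) : coeff (n + 1) f = coeff n (derivative K f) / (n + 1) := by
  rw [coeff_derivative, mul_div_cancel_right₀ _ (Nat.cast_add_one_ne_zero n)]

theorem constantCoeff_oneSubExpNeg : constantCoeff oneSubExpNeg = 0 := by
  simp [oneSubExpNeg, constantCoeff_mk]

theorem derivative_oneSubExpNeg_s8 : derivative ℂ oneSubExpNeg = 1 - oneSubExpNeg := by
  ext n
  rw [coeff_derivative]
  simp only [oneSubExpNeg, coeff_mk, map_sub, coeff_one, Nat.add_one_ne_zero, if_false,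
    Nat.factorial_succ]
  split_ifs with hn
  · subst hn; simp
  · push_cast
    field_simp
    ring

theorem derivative_oneSubExpNeg_pow_succ (m : ℕ) :
    derivative ℂ (oneSubExpNeg ^ (m + 1))
      = C ((m : ℂ) + 1) * (oneSubExpNeg ^ m - oneSubExpNeg ^ (m + 1)) := by
  rw [derivative_pow, derivative_oneSubExpNeg_s8, Nat.add_sub_cancel, map_add, map_natCast, map_one]
  push_cast
  ring

theorem coeff_oneSubExpNeg_pow (l n : ℕ) :
    coeff l (oneSubExpNeg ^ n)
      = (-1 : ℂ) ^ (n + l) * n.factorial * Nat.stirlingSecond l n / l.factorial := by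
  induction l generalizing n with
  | zero => cases n <;> simp [constantCoeff_oneSubExpNeg]
  | succ l ih =>
    cases n with
    | zero => simp
    | succ m =>
      rw [coeff_succ_eq_coeff_derivative_div, derivative_oneSubExpNeg_pow_succ, coeff_C_mul,
        map_sub, ih, ih, Nat.stirlingSecond_succ_succ, Nat.factorial_succ, Nat.factorial_succ]
      push_cast
      field_simp
      ring

/-- `(1/t)·Li_k(1−e^{−t}) = Σ_{l≥0} (Σ_{p=1}^{l+1}
((−1)^{p+l+1}/pᵏ)·p!·S₂(l+1,p)/(l+1)) tˡ/l!`, stated multiplicatively as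
`Li_k(1−e^{−t}) = t · Σ_{l≥0} c_l tˡ/l!`. -/
theorem polyLog_one_sub_exp_neg_eq (k : ℤ) :
    polyLogComp k = PowerSeries.X * PowerSeries.mk (fun l =>
      (∑ p ∈ Finset.Icc 1 (l + 1),
          (-1 : ℂ) ^ (p + l + 1) / (p : ℂ) ^ k * (p.factorial : ℂ)
            * (S2 (l + 1) p : ℂ) / ((l : ℂ) + 1)) / (l.factorial : ℂ)) := by
  ext (_ | l)
  · simp [polyLogComp]
  rw [polyLogComp, coeff_mk, coeff_succ_X_mul, coeff_mk, Finset.sum_div]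
  refine Finset.sum_congr rfl fun p _ => ?_
  rw [coeff_oneSubExpNeg_pow, S2_eq_stirlingSecond, Nat.factorial_succ, ← add_assoc]
  push_cast
  field_simp
end
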